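/- arXiv:1707.00150 — 6 statements merged into one kernel-verified Lean document; each statement's English description precedes it below -/
import Mathlib

section
/- Let π : X → Y be a continuous surjection between compact metric spaces. Then π is semiopen if and only if the set X₀ = {x ∈ X : the set-valued map y ↦ π⁻¹(y) from Y to the space of closed subsets of X (with Vietoris/Hausdorff topology) is continuous at π(x)} is dense in X. -/
/-!
If the fibre map `F y = π⁻¹(y)` is continuous at `π x` for `x ∈ U`, then every `y` near `π x`
has a fibre point close to `x`, so `π '' U` is a neighbourhood of `π x`.

Conversely, `F` is always upper semicontinuous, so for each point `x` the function
`y ↦ infDist x (F y)` is lower semicontinuous and hence continuous on a residual set. Since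
the functions `infDist · (F y)` are all 1-Lipschitz and `X` is compact, pointwise
convergence on a countable dense set is uniform convergence, which is Hausdorff convergence of
the fibres; thus `F` is continuous on a residual subset of `Y`. A semiopen continuous map pulls
residual sets back to residual sets, and `X` is a Baire space.
-/

open TopologicalSpace Metric Set Filter Topology

def IsSemiopenMap {X Y : Type*} [TopologicalSpace X] [TopologicalSpace Y] (f : X → Y) : Prop :=
  ∀ U : Set X, IsOpen U → U.Nonempty → (interior (f '' U)).Nonempty

section Semiopen

variable {X Y : Type*} [TopologicalSpace X] [TopologicalSpace Y] {f : X → Y}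

theorem Dense.preimage_of_isSemiopenMap {t : Set Y} (ht : Dense t) (hf : IsSemiopenMap f) :
    Dense (f ⁻¹' t) := by
  refine dense_iff_inter_open.2 fun U hU hne => ?_
  obtain ⟨y, hyU, hyt⟩ := ht.inter_open_nonempty _ isOpen_interior (hf U hU hne)
  obtain ⟨x, hxU, rfl⟩ := interior_subset hyU
  exact ⟨x, hxU, hyt⟩

theorem tendsto_residual_of_isSemiopenMap (hc : Continuous f) (hf : IsSemiopenMap f) :
    Tendsto f (residual X) (residual Y) := by
  refine le_countableGenerate_iff_of_countableInterFilter.mpr ?_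
  rintro t ⟨ht, htd⟩
  exact residual_of_dense_open (ht.preimage hc) (htd.preimage_of_isSemiopenMap hf)

end Semiopen

theorem LowerSemicontinuous.eventually_residual_continuousAt {Y : Type*} [TopologicalSpace Y]
    {g : Y → ℝ} (hg : LowerSemicontinuous g) : ∀ᶠ y in residual Y, ContinuousAt g y := by
  -- `g` is discontinuous at `y` iff `y ∈ jump q r` for some rationals `q < r`.
  set jump : ℚ → ℚ → Set Y := fun q r => {y | g y ≤ q} ∩ closure {y | (r : ℝ) ≤ g y}
  have hjump : ∀ q r : ℚ, q < r → (jump q r)ᶜ ∈ residual Y := by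
    intro q r hqr
    have hempty : interior (jump q r) = ∅ := by
      refine subset_empty_iff.1 fun y hy => ?_
      obtain ⟨z, hz, hzr⟩ : (interior (jump q r) ∩ {y | (r : ℝ) ≤ g y}).Nonempty :=
        mem_closure_iff.1 (interior_subset hy).2 _ isOpen_interior hy
      have : g z ≤ q := (interior_subset hz).1
      exact absurd (hzr.trans this) (by exact_mod_cast hqr.not_ge)
    exact residual_of_dense_open
      ((hg.isClosed_preimage q).inter isClosed_closure).isOpen_compl
      (interior_eq_empty_iff_dense_compl.1 hempty)
  have : ∀ᶠ y in residual Y, ∀ q r : ℚ, q < r → y ∉ jump q r := by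
    simp only [eventually_countable_forall]
    exact hjump
  filter_upwards [this] with y hy
  refine continuousAt_iff_lower_upperSemicontinuousAt.2 ⟨hg y, fun c hc => ?_⟩
  by_contra hfreq
  obtain ⟨q, hyq, hqc⟩ := exists_rat_btwn hc
  obtain ⟨r, hqr, hrc⟩ := exists_rat_btwn hqc
  refine hy q r (by exact_mod_cast hqr) ⟨hyq.le, mem_closure_iff_frequently.2 ?_⟩
  exact (not_eventually.1 hfreq).mono fun z hz => hrc.le.trans (not_lt.1 hz)

theorem hausdorffDist_le_of_forall_abs_sub_infDist_le {X : Type*} [PseudoMetricSpace X]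
    {s t : Set X} {r : ℝ} (hr : 0 ≤ r) (h : ∀ x, |infDist x s - infDist x t| ≤ r) :
    hausdorffDist s t ≤ r := by
  refine hausdorffDist_le_of_infDist hr (fun x hx => ?_) fun x hx => ?_
  · exact (le_abs_self _).trans (by simpa [infDist_zero_of_mem hx, abs_sub_comm] using h x)
  · exact (le_abs_self _).trans (by simpa [infDist_zero_of_mem hx] using h x)

namespace TopologicalSpace.NonemptyCompacts

variable {X : Type*} [MetricSpace X] {ι : Type*} {l : Filter ι}

theorem tendsto_of_tendsto_infDist [CompactSpace X] {F : ι → NonemptyCompacts X}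
    {K : NonemptyCompacts X} {s : Set X} (hs : Dense s)
    (h : ∀ x ∈ s, Tendsto (fun i => infDist x (F i : Set X)) l (𝓝 (infDist x (K : Set X)))) :
    Tendsto F l (𝓝 K) := by
  have hequi : Equicontinuous fun i x => infDist x (F i : Set X) :=
    (LipschitzWith.uniformEquicontinuous _ 1 fun i => lipschitz_infDist_pt _).equicontinuous
  have hpointwise :
      ∀ x, Tendsto (fun i => infDist x (F i : Set X)) l (𝓝 (infDist x (K : Set X))) := by
    have := (hequi.isClosed_setOfPred_tendsto (l := l)
      (lipschitz_infDist_pt (K : Set X)).continuous).closure_subset_iff.2 h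
    simpa [hs.closure_eq, eq_univ_iff_forall] using this
  have huniform := (hequi.tendsto_uniformFun_iff_pi l _).2 (tendsto_pi_nhds.2 hpointwise)
  rw [UniformFun.tendsto_iff_tendstoUniformly, Metric.tendstoUniformly_iff] at huniform
  refine Metric.tendsto_nhds.2 fun ε hε => ?_
  filter_upwards [huniform (ε / 2) (half_pos hε)] with i hi
  rw [NonemptyCompacts.dist_eq]
  refine (hausdorffDist_le_of_forall_abs_sub_infDist_le (half_pos hε).le fun x => ?_).trans_lt
    (half_lt_self hε)
  simpa [Real.dist_eq, abs_sub_comm] using (hi x).le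

theorem eventually_inter_nonempty_of_tendsto {F : ι → NonemptyCompacts X} {K : NonemptyCompacts X}
    (hF : Tendsto F l (𝓝 K)) {x : X} (hx : x ∈ K) {U : Set X} (hU : U ∈ 𝓝 x) :
    ∀ᶠ i in l, ((F i : Set X) ∩ U).Nonempty := by
  obtain ⟨ε, hε, hball⟩ := Metric.mem_nhds_iff.1 hU
  filter_upwards [Metric.tendsto_nhds.1 hF ε hε] with i hi
  obtain ⟨x', hx'F, hxx'⟩ := exists_dist_lt_of_hausdorffDist_lt hx
    (by rwa [dist_comm, NonemptyCompacts.dist_eq] at hi) (edist_ne_top K (F i))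
  exact ⟨x', hx'F, hball (mem_ball_comm.1 hxx')⟩

end TopologicalSpace.NonemptyCompacts

def fiberMap {X Y : Type*} [TopologicalSpace X] [CompactSpace X] [TopologicalSpace Y] [T1Space Y]
    {π : X → Y} (hc : Continuous π) (hs : Function.Surjective π) (y : Y) : NonemptyCompacts X :=
  ⟨⟨π ⁻¹' {y}, (isClosed_singleton.preimage hc).isCompact⟩, hs y⟩

section Fibers

variable {X Y : Type*} [MetricSpace X] [CompactSpace X] [TopologicalSpace Y] [T2Space Y]
  {π : X → Y}

theorem setOf_infDist_fiber_le (hc : Continuous π) (hs : Function.Surjective π) (x : X) (c : ℝ) :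
    {y | infDist x (π ⁻¹' {y}) ≤ c} = π '' closedBall x c := by
  ext y
  constructor
  · intro hy
    obtain ⟨z, hz, hdist⟩ := (isClosed_singleton.preimage hc).isCompact.exists_infDist_eq_dist
      (hs y) x
    exact ⟨z, by rwa [mem_closedBall, dist_comm, ← hdist], hz⟩
  · rintro ⟨z, hz, rfl⟩
    exact (infDist_le_dist_of_mem (s := π ⁻¹' {π z}) rfl).trans
      (by rwa [mem_closedBall, dist_comm z x] at hz)

theorem lowerSemicontinuous_infDist_fiber (hc : Continuous π) (hs : Function.Surjective π)
    (x : X) : LowerSemicontinuous fun y => infDist x (π ⁻¹' {y}) :=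
  lowerSemicontinuous_iff_isClosed_preimage.2 fun c => by
    change IsClosed {y | infDist x (π ⁻¹' {y}) ≤ c}
    rw [setOf_infDist_fiber_le hc hs]
    exact hc.isClosedMap _ isClosed_closedBall

theorem eventually_residual_continuousAt_fiberMap (hc : Continuous π)
    (hs : Function.Surjective π) : ∀ᶠ y in residual Y, ContinuousAt (fiberMap hc hs) y := by
  obtain ⟨D, hD_countable, hD_dense⟩ := exists_countable_dense X
  have hcont : ∀ᶠ y in residual Y, ∀ x ∈ D, ContinuousAt (fun y => infDist x (π ⁻¹' {y})) y :=
    (eventually_countable_ball hD_countable).2 fun x _ =>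
      (lowerSemicontinuous_infDist_fiber hc hs x).eventually_residual_continuousAt
  filter_upwards [hcont] with y hy
  exact NonemptyCompacts.tendsto_of_tendsto_infDist hD_dense hy

end Fibers

theorem stmt_1_general {X Y : Type*} [MetricSpace X] [MetricSpace Y]
    [CompactSpace X]
    (π : X → Y) (hc : Continuous π) (hs : Function.Surjective π) :
    (∀ U : Set X, IsOpen U → U.Nonempty → (interior (π '' U)).Nonempty) ↔
      Dense {x : X |
        ContinuousAt
          (fun y : Y =>
            (⟨⟨π ⁻¹' {y}, (isClosed_singleton.preimage hc).isCompact⟩, hs y⟩ :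
              NonemptyCompacts X))
          (π x)} := by
  change IsSemiopenMap π ↔ Dense {x | ContinuousAt (fiberMap hc hs) (π x)}
  constructor
  · intro hπ
    exact dense_of_mem_residual
      (tendsto_residual_of_isSemiopenMap hc hπ (eventually_residual_continuousAt_fiberMap hc hs))
  · intro hdense U hU hne
    obtain ⟨x, hx, hxU⟩ := hdense.exists_mem_open hU hne
    refine ⟨π x, mem_interior_iff_mem_nhds.2 ?_⟩
    filter_upwards [NonemptyCompacts.eventually_inter_nonempty_of_tendsto hx
      (mem_singleton (π x)) (hU.mem_nhds hxU)] with y ⟨x', hx'y, hx'U⟩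
    exact ⟨x', hx'U, hx'y⟩

/-- A continuous surjection between compact metric spaces is semiopen iff the set
of points `x` where the fiber map `y ↦ π⁻¹(y)` (into the hyperspace of closed
subsets of `X` with the Hausdorff metric) is continuous at `π x` is dense in `X`. -/
theorem stmt_1 {X Y : Type*} [MetricSpace X] [MetricSpace Y]
    [CompactSpace X] [CompactSpace Y]
    (π : X → Y) (hc : Continuous π) (hs : Function.Surjective π) :
    (∀ U : Set X, IsOpen U → U.Nonempty → (interior (π '' U)).Nonempty) ↔
      Dense {x : X |
        ContinuousAt
          (fun y : Y =>
            (⟨⟨π ⁻¹' {y}, (isClosed_singleton.preimage hc).isCompact⟩, hs y⟩ :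
              NonemptyCompacts X))
          (π x)} :=
  stmt_1_general π hc hs
end

section
/- Let Γ act by homeomorphisms on compact metric spaces X and Y with both actions minimal, and let π : X → Y be a Γ-equivariant continuous surjection admitting a continuous Γ-equivariant section y ↦ λ_y ∈ M(X) with π*(λ_y) = δ_y. Then there exists a dense Gδ subset Y_fs ⊆ Y such that supp(λ_y) = π⁻¹(y) for every y ∈ Y_fs. -/
/-! For open `U ⊆ X` the set `O U = {y | 0 < λ_y U}` is open by the portmanteau theorem, so its
frontier is nowhere dense, and avoiding the frontiers of `O U` for `U` in a countable basis is a
dense Gδ condition on `y`. Supports always lie in the fibres. Conversely, minimality of `X` gives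
`π '' U ⊆ closure (O U)`: for `x ∈ U` and an open `V ∋ π x`, some translate `γ • x₀` of a point
`x₀ ∈ supp λ_y` lies in `U ∩ π⁻¹ V`, and then `λ_{γ y} U = λ_y (γ⁻¹ U) > 0` with `γ y ∈ V`.
Away from the frontier, `closure (O U)` is contained in `O U`, so for such `y` every basic
neighbourhood of a point of the fibre has positive `λ_y`-measure. -/

open MeasureTheory

def msupport {X : Type*} [TopologicalSpace X] [MeasurableSpace X]
    (μ : Measure X) : Set X :=
  {x : X | ∀ U : Set X, IsOpen U → x ∈ U → 0 < μ U}

open Filter Topology Set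

theorem msupport_eq_support {X : Type*} [TopologicalSpace X] [MeasurableSpace X]
    (μ : Measure X) : msupport μ = μ.support := by
  ext x
  simp only [msupport, Measure.support_eq_forall_isOpen, mem_ofPred_eq]
  exact forall_congr' fun U => imp.swap

theorem IsOpen.dense_compl_frontier {X : Type*} [TopologicalSpace X] {s : Set X}
    (hs : IsOpen s) : Dense (frontier s)ᶜ :=
  interior_eq_empty_iff_dense_compl.1 (frontier_compl s ▸ interior_frontier hs.isClosed_compl)

theorem MeasureTheory.ProbabilityMeasure.lowerSemicontinuous_apply_of_isOpen {Ω : Type*}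
    [MeasurableSpace Ω] [TopologicalSpace Ω] [OpensMeasurableSpace Ω] [HasOuterApproxClosed Ω]
    {G : Set Ω} (hG : IsOpen G) :
    LowerSemicontinuous fun μ : ProbabilityMeasure Ω => (μ : Measure Ω) G :=
  lowerSemicontinuous_iff_le_liminf.2 fun _ =>
    ProbabilityMeasure.le_liminf_measure_open_of_tendsto tendsto_id hG

namespace MeasureTheory.Measure

variable {X Y : Type*} [TopologicalSpace X] [MeasurableSpace X]
  [TopologicalSpace Y] [MeasurableSpace Y]

theorem support_subset_preimage_of_map_eq_dirac [T1Space Y] [MeasurableSingletonClass Y]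
    {μ : Measure X} {f : X → Y} (hf : Continuous f) (hfμ : AEMeasurable f μ) {y : Y}
    (h : μ.map f = dirac y) : μ.support ⊆ f ⁻¹' {y} :=
  support_subset_of_isClosed (isClosed_singleton.preimage hf) <|
    tendsto_ae_map hfμ <| by rw [h, ae_dirac_eq]; exact mem_pure.2 rfl

theorem image_support_subset_support_map [OpensMeasurableSpace X] [BorelSpace Y]
    {μ : Measure X} {f : X → Y} (hf : Continuous f) : f '' μ.support ⊆ (μ.map f).support := by
  rintro _ ⟨x, hx, rfl⟩
  rw [support_eq_forall_isOpen] at hx ⊢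
  intro U hxU hU
  rw [map_apply hf.measurable hU.measurableSet]
  exact hx _ hxU (hU.preimage hf)

end MeasureTheory.Measure

theorem image_subset_closure_setOf_measure_pos {Γ X Y : Type*} [Monoid Γ] [TopologicalSpace X]
    [MeasurableSpace X] [BorelSpace X] [HereditarilyLindelofSpace X] [MulAction Γ X]
    [ContinuousConstSMul Γ X] [TopologicalSpace Y] [MulAction Γ Y] {π : X → Y}
    {lam : Y → ProbabilityMeasure X} (hminX : ∀ x : X, Dense (MulAction.orbit Γ x))
    (hc : Continuous π) (heq : ∀ (γ : Γ) (x : X), π (γ • x) = γ • π x)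
    (hlameq : ∀ (γ : Γ) (y : Y),
      (lam (γ • y) : Measure X) = (lam y : Measure X).map (fun x => γ • x))
    (hsupp : ∀ y, (lam y : Measure X).support ⊆ π ⁻¹' {y}) {U : Set X} (hU : IsOpen U) :
    π '' U ⊆ closure {y | 0 < (lam y : Measure X) U} := by
  rintro _ ⟨x, hxU, rfl⟩
  refine mem_closure_iff.2 fun V hV hxV => ?_
  obtain ⟨x₀, hx₀⟩ :=
    Measure.nonempty_support (IsProbabilityMeasure.ne_zero (lam (π x) : Measure X))
  obtain ⟨_, ⟨γ, rfl⟩, hγU, hγV⟩ :=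
    (hminX x₀).exists_mem_open (hU.inter (hV.preimage hc)) ⟨x, hxU, hxV⟩
  refine ⟨π (γ • x₀), hγV, ?_⟩
  change 0 < (lam (π (γ • x₀)) : Measure X) U
  rw [heq, hsupp _ hx₀, hlameq]
  have hγx₀ := Measure.image_support_subset_support_map (continuous_const_smul γ)
    ⟨x₀, hx₀, rfl⟩
  exact (Measure.mem_support_iff_forall _).1 hγx₀ U (hU.mem_nhds hγU)

theorem stmt_8_general {Γ X Y : Type*} [Group Γ]
    [MetricSpace X] [CompactSpace X] [MetricSpace Y] [CompactSpace Y]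
    [MeasurableSpace X] [BorelSpace X] [MeasurableSpace Y] [BorelSpace Y]
    [MulAction Γ X] [ContinuousConstSMul Γ X]
    [MulAction Γ Y]
    (hminX : ∀ x : X, Dense (MulAction.orbit Γ x))
    (π : X → Y) (hc : Continuous π)
    (heq : ∀ (γ : Γ) (x : X), π (γ • x) = γ • π x)
    (lam : Y → ProbabilityMeasure X) (hlam : Continuous lam)
    (hlameq : ∀ (γ : Γ) (y : Y),
      (lam (γ • y) : Measure X) = (lam y : Measure X).map (fun x => γ • x))
    (hsec : ∀ y : Y, (lam y : Measure X).map π = Measure.dirac y) :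
    ∃ Yfs : Set Y, Dense Yfs ∧ IsGδ Yfs ∧
      ∀ y ∈ Yfs, msupport (lam y : Measure X) = π ⁻¹' {y} := by
  obtain ⟨B, hBc, -, hB⟩ := TopologicalSpace.exists_countable_basis X
  set O : Set X → Set Y := fun U => {y | 0 < (lam y : Measure X) U}
  have hO : ∀ U ∈ B, IsOpen (O U) := fun U hU =>
    ((ProbabilityMeasure.lowerSemicontinuous_apply_of_isOpen (hB.isOpen hU)).comp
      hlam).isOpen_preimage 0
  have hsupp : ∀ y, (lam y : Measure X).support ⊆ π ⁻¹' {y} := fun y =>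
    Measure.support_subset_preimage_of_map_eq_dirac hc hc.aemeasurable (hsec y)
  refine ⟨⋂ U ∈ B, (frontier (O U))ᶜ,
    dense_biInter_of_isOpen (fun _ _ => isClosed_frontier.isOpen_compl) hBc
      fun U hU => (hO U hU).dense_compl_frontier,
    .biInter hBc fun _ _ => isClosed_frontier.isOpen_compl.isGδ, fun y hy => ?_⟩
  rw [msupport_eq_support]
  refine (hsupp y).antisymm fun x hx =>
    hB.nhds_hasBasis.mem_measureSupport.2 fun U ⟨hU, hxU⟩ => ?_
  have hyU : y ∈ closure (O U) :=
    image_subset_closure_setOf_measure_pos hminX hc heq hlameq hsupp (hB.isOpen hU) ⟨x, hxU, hx⟩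
  show y ∈ O U
  exact interior_subset <| (closure_sdiff_frontier (O U)).subset ⟨hyU, mem_iInter₂.1 hy U hU⟩

/-- For a RIM extension `π : X → Y` of minimal compact metric `Γ`-systems, with
continuous `Γ`-equivariant section `y ↦ λ_y`, there is a dense Gδ set
`Y_fs ⊆ Y` on which `supp(λ_y) = π⁻¹(y)`. -/
theorem stmt_8 {Γ X Y : Type*} [Group Γ]
    [MetricSpace X] [CompactSpace X] [MetricSpace Y] [CompactSpace Y]
    [MeasurableSpace X] [BorelSpace X] [MeasurableSpace Y] [BorelSpace Y]
    [MulAction Γ X] [ContinuousConstSMul Γ X]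
    [MulAction Γ Y] [ContinuousConstSMul Γ Y]
    (hminX : ∀ x : X, Dense (MulAction.orbit Γ x))
    (hminY : ∀ y : Y, Dense (MulAction.orbit Γ y))
    (π : X → Y) (hc : Continuous π) (hs : Function.Surjective π)
    (heq : ∀ (γ : Γ) (x : X), π (γ • x) = γ • π x)
    (lam : Y → ProbabilityMeasure X) (hlam : Continuous lam)
    (hlameq : ∀ (γ : Γ) (y : Y),
      (lam (γ • y) : Measure X) = (lam y : Measure X).map (fun x => γ • x))
    (hsec : ∀ y : Y, (lam y : Measure X).map π = Measure.dirac y) :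
    ∃ Yfs : Set Y, Dense Yfs ∧ IsGδ Yfs ∧
      ∀ y ∈ Yfs, msupport (lam y : Measure X) = π ⁻¹' {y} :=
  stmt_8_general hminX π hc heq lam hlam hlameq hsec
end

section
/- Let v be an idempotent element of the enveloping semigroup E(X,Γ) of a compact metric tame system (X,Γ), and let C_v be the set of continuity points of the restriction of v to the closure of vX. Then C_v ⊆ vX, i.e., every continuity point x of v↾cl(vX) satisfies vx = x. -/
open Filter Topology

/-- Let `v` be an idempotent of the enveloping semigroup of a compact metric
tame system `(X,Γ)`. Then every continuity point of the restriction of `v` to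
the closure of `vX` is fixed by `v`; i.e. `C_v ⊆ vX`. -/
theorem stmt_12 {Γ X : Type*} [Group Γ]
    [MetricSpace X] [CompactSpace X]
    [MulAction Γ X] [ContinuousConstSMul Γ X]
    (E : Set (X → X)) (hE : E = closure (Set.range fun γ : Γ => fun x : X => γ • x))
    (htame : ∀ p ∈ E, ∃ f : ℕ → Γ,
      ∀ x : X, Tendsto (fun n => f n • x) atTop (𝓝 (p x)))
    (v : X → X) (hv : v ∈ E) (hidem : v ∘ v = v) :
    ∀ x ∈ closure (Set.range v),
      ContinuousWithinAt v (closure (Set.range v)) x → v x = x := by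
  intro x hx hcont
  obtain ⟨u, hu, hlim⟩ := mem_closure_iff_seq_limit.mp hx
  have hfix : ∀ n, v (u n) = u n := fun n => by
    obtain ⟨y, hy⟩ := hu n
    rw [← hy]
    exact congrFun hidem y
  have hmem : ∀ n, u n ∈ closure (Set.range v) := fun n => subset_closure (hu n)
  have h1 : Tendsto (fun n => v (u n)) atTop (𝓝 (v x)) :=
    hcont.tendsto.comp
      (tendsto_nhdsWithin_iff.mpr ⟨hlim, Filter.Eventually.of_forall hmem⟩)
  simp only [hfix] at h1
  exact tendsto_nhds_unique h1 hlim
end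

section
/- Let g_n be a sequence in GL(d,ℝ). Then there exists a subsequence (g_{n_i}) such that the induced maps on real projective space P(ℝ^d) converge pointwise to a map p : P(ℝ^d) → P(ℝ^d). Consequently, the action of GL(d,ℝ) on P(ℝ^d) is tame: the enveloping semigroup consists of pointwise sequential limits of elements of the group. -/
/-!
Rescale the restrictions `gₙ|_W` to operator norm one; along an ultrafilter they converge, by
compactness of the unit sphere, to a nonzero `A_W`, and on the lines of `W` outside `ker A_W` the
projective maps converge to `[A_W v]`. Passing to `W ⊓ ker A_W` and iterating, finitely many
subspaces control every line. Finitely many convergences are witnessed by a countably generated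
filter, from which a subsequence, or a sequence in `GL(d, ℝ)` realising a point of the closure,
is extracted.
-/

open Filter Topology Projectivization
open scoped LinearAlgebra.Projectivization

variable {d : ℕ}

/-- The quotient topology on the real projective space `ℙ(ℝ^d)`. -/
noncomputable instance : TopologicalSpace (ℙ ℝ (Fin d → ℝ)) :=
  inferInstanceAs (TopologicalSpace (Quotient (projectivizationSetoid ℝ (Fin d → ℝ))))

/-- The projective map induced by an invertible linear map. -/
noncomputable def projMap (g : (Fin d → ℝ) ≃ₗ[ℝ] (Fin d → ℝ)) :
    ℙ ℝ (Fin d → ℝ) → ℙ ℝ (Fin d → ℝ) :=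
  Projectivization.map (g : (Fin d → ℝ) →ₗ[ℝ] (Fin d → ℝ)) g.injective

section Flag

variable {R M N : Type*} [Ring R] [AddCommGroup M] [Module R M] [IsArtinian R M]
  [AddCommGroup N] [Module R N]

/-- `𝒮` is the chain `W₀ = ⊤`, `Wₖ₊₁ = Wₖ ⊓ ker (A Wₖ)`, finite because `M` is artinian. -/
theorem exists_finset_submodule_apply_ne_zero (A : Submodule R M → M →ₗ[R] N)
    (hA : ∀ W : Submodule R M, W ≠ ⊥ → ∃ w ∈ W, A W w ≠ 0) :
    ∃ 𝒮 : Finset (Submodule R M), (∀ S ∈ 𝒮, S ≠ ⊥) ∧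
      ∀ v : M, v ≠ 0 → ∃ S ∈ 𝒮, v ∈ S ∧ A S v ≠ 0 := by
  classical
  suffices ∀ W : Submodule R M, ∃ 𝒮 : Finset (Submodule R M), (∀ S ∈ 𝒮, S ≠ ⊥) ∧
      ∀ v ∈ W, v ≠ 0 → ∃ S ∈ 𝒮, v ∈ S ∧ A S v ≠ 0 by
    obtain ⟨𝒮, h𝒮, hcover⟩ := this ⊤
    exact ⟨𝒮, h𝒮, fun v => hcover v Submodule.mem_top⟩
  intro W
  induction W using WellFoundedLT.induction with
  | _ W IH =>
  by_cases hW : W = ⊥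
  · subst hW
    exact ⟨∅, by simp, fun v hv hv0 => absurd ((Submodule.mem_bot R).1 hv) hv0⟩
  obtain ⟨w, hwW, hAw⟩ := hA W hW
  have hlt : W ⊓ LinearMap.ker (A W) < W :=
    inf_lt_left.2 fun h => hAw (LinearMap.mem_ker.1 (h hwW))
  obtain ⟨𝒮, h𝒮, hcover⟩ := IH _ hlt
  refine ⟨insert W 𝒮, by simpa [hW] using h𝒮, fun v hvW hv => ?_⟩
  by_cases hAv : A W v = 0
  · obtain ⟨S, hS, hvS, hAS⟩ := hcover v ⟨hvW, hAv⟩ hv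
    exact ⟨S, Finset.mem_insert_of_mem hS, hvS, hAS⟩
  · exact ⟨W, Finset.mem_insert_self W 𝒮, hvW, hAv⟩

end Flag

theorem Ultrafilter.exists_norm_eq_one_tendsto_inv_norm_smul {α E : Type*}
    [NormedAddCommGroup E] [NormedSpace ℝ E] [ProperSpace E] (U : Ultrafilter α) {f : α → E}
    (hf : ∀ a, f a ≠ 0) : ∃ A : E, ‖A‖ = 1 ∧ Tendsto (fun a => ‖f a‖⁻¹ • f a) U (𝓝 A) := by
  have hsphere : ∀ a, ‖f a‖⁻¹ • f a ∈ Metric.sphere (0 : E) 1 := fun a => by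
    simpa using norm_smul_inv_norm (𝕜 := ℝ) (hf a)
  obtain ⟨A, hA, hUA⟩ := (isCompact_sphere (0 : E) 1).ultrafilter_le_nhds
    (U.map fun a => ‖f a‖⁻¹ • f a) (le_principal_iff.2 (mem_map.2 (univ_mem' hsphere)))
  exact ⟨A, by simpa using hA, hUA⟩

open Matrix in
noncomputable def lineProjector : ℙ ℝ (Fin d → ℝ) → Matrix (Fin d) (Fin d) ℝ :=
  Projectivization.lift (fun v => (v.1 ⬝ᵥ v.1)⁻¹ • vecMulVec v.1 v.1) <| by
    rintro ⟨a, ha⟩ ⟨b, hb⟩ t rfl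
    have ht : t ≠ 0 := by rintro rfl; simp at ha
    simp only [smul_vecMulVec, vecMulVec_smul, dotProduct_smul, smul_dotProduct, smul_eq_mul,
      smul_smul]
    field_simp

open Matrix in
theorem lineProjector_mk {v : Fin d → ℝ} (hv : v ≠ 0) :
    lineProjector (mk ℝ v hv) = (v ⬝ᵥ v)⁻¹ • vecMulVec v v := rfl

theorem continuous_lineProjector : Continuous (lineProjector (d := d)) := by
  refine continuous_quot_lift _ ?_
  have hv : Continuous fun v : {v : Fin d → ℝ // v ≠ 0} => v.1 := continuous_subtype_val
  exact ((hv.dotProduct hv).inv₀ fun v => dotProduct_self_eq_zero.not.2 v.2).smul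
    (hv.matrix_vecMulVec hv)

open Matrix in
theorem lineProjector_injective : Function.Injective (lineProjector (d := d)) := by
  intro x y hxy
  induction x using Projectivization.ind with | h v hv =>
  induction y using Projectivization.ind with | h w hw =>
  rw [lineProjector_mk, lineProjector_mk] at hxy
  have hww : w ⬝ᵥ w ≠ 0 := dotProduct_self_eq_zero.not.2 hw
  have hwv : ((v ⬝ᵥ v)⁻¹ * (v ⬝ᵥ w)) • v = w := by
    simpa [smul_mulVec, vecMulVec_mulVec, smul_smul, hww] using congrArg (· *ᵥ w) hxy
  exact ((mk_eq_mk_iff' ℝ w v hw hv).2 ⟨_, hwv⟩).symm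

instance : T2Space (ℙ ℝ (Fin d → ℝ)) :=
  .of_injective_continuous lineProjector_injective continuous_lineProjector

section Convergence

variable {α : Type*}

theorem tendsto_mk_of_tendsto {F : Filter α} {y : α → Fin d → ℝ} (hy : ∀ a, y a ≠ 0)
    {w : Fin d → ℝ} (hw : w ≠ 0) (h : Tendsto y F (𝓝 w)) :
    Tendsto (fun a => mk ℝ (y a) (hy a)) F (𝓝 (mk ℝ w hw)) :=
  (continuous_quot_mk.tendsto _).comp (tendsto_subtype_rng.2 h)

theorem tendsto_projMap_of_tendsto_smul {F : Filter α}
    {G : α → (Fin d → ℝ) ≃ₗ[ℝ] (Fin d → ℝ)} {c : α → ℝ} (hc : ∀ a, c a ≠ 0)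
    {v w : Fin d → ℝ} (hv : v ≠ 0) (hw : w ≠ 0)
    (h : Tendsto (fun a => c a • G a v) F (𝓝 w)) :
    Tendsto (fun a => projMap (G a) (mk ℝ v hv)) F (𝓝 (mk ℝ w hw)) := by
  have hGv : ∀ a, c a • G a v ≠ 0 := fun a =>
    smul_ne_zero (hc a) ((G a).map_ne_zero_iff.2 hv)
  refine (tendsto_mk_of_tendsto hGv hw h).congr fun a => ?_
  exact (mk_eq_mk_iff' ℝ _ _ _ _).2 ⟨c a, rfl⟩

/-- For a projection `P` onto `W`, this stands in for the restriction `g|_W`. -/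
noncomputable def compProj (g : (Fin d → ℝ) ≃ₗ[ℝ] (Fin d → ℝ))
    (P : (Fin d → ℝ) →ₗ[ℝ] (Fin d → ℝ)) : (Fin d → ℝ) →L[ℝ] (Fin d → ℝ) :=
  LinearMap.toContinuousLinearMap ((g : (Fin d → ℝ) →ₗ[ℝ] (Fin d → ℝ)) ∘ₗ P)

@[simp]
theorem compProj_apply (g : (Fin d → ℝ) ≃ₗ[ℝ] (Fin d → ℝ))
    (P : (Fin d → ℝ) →ₗ[ℝ] (Fin d → ℝ)) (x : Fin d → ℝ) : compProj g P x = g (P x) := rfl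

variable {W : Submodule ℝ (Fin d → ℝ)} {P : (Fin d → ℝ) →ₗ[ℝ] (Fin d → ℝ)}

theorem compProj_ne_zero (hP : LinearMap.IsProj W P) (hW : W ≠ ⊥)
    (g : (Fin d → ℝ) ≃ₗ[ℝ] (Fin d → ℝ)) : compProj g P ≠ 0 := by
  obtain ⟨v, hvW, hv⟩ := Submodule.exists_mem_ne_zero_of_ne_bot hW
  intro h
  simpa [hP.map_id v hvW, hv] using DFunLike.congr_fun h v

theorem tendsto_projMap_of_tendsto_compProj (hP : LinearMap.IsProj W P) {F : Filter α}
    {G : α → (Fin d → ℝ) ≃ₗ[ℝ] (Fin d → ℝ)} {A : (Fin d → ℝ) →L[ℝ] (Fin d → ℝ)}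
    (hA : Tendsto (fun a => ‖compProj (G a) P‖⁻¹ • compProj (G a) P) F (𝓝 A))
    {v : Fin d → ℝ} (hvW : v ∈ W) (hv : v ≠ 0) (hAv : A v ≠ 0) :
    Tendsto (fun a => projMap (G a) (mk ℝ v hv)) F (𝓝 (mk ℝ (A v) hAv)) := by
  have hW : W ≠ ⊥ := fun h => hv (by simpa [h] using hvW)
  refine tendsto_projMap_of_tendsto_smul (fun a => inv_ne_zero
    (norm_ne_zero_iff.2 (compProj_ne_zero hP hW (G a)))) hv hAv ?_
  simpa [hP.map_id v hvW] using hA.eval_const v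

theorem Ultrafilter.exists_tendsto_compProj (U : Ultrafilter α) (hP : LinearMap.IsProj W P)
    (hW : W ≠ ⊥) (G : α → (Fin d → ℝ) ≃ₗ[ℝ] (Fin d → ℝ)) :
    ∃ A : (Fin d → ℝ) →L[ℝ] (Fin d → ℝ),
      Tendsto (fun a => ‖compProj (G a) P‖⁻¹ • compProj (G a) P) U (𝓝 A) ∧
        ∃ w ∈ W, A w ≠ 0 := by
  obtain ⟨A, hA1, hA⟩ :=
    U.exists_norm_eq_one_tendsto_inv_norm_smul fun a => compProj_ne_zero hP hW (G a)
  obtain ⟨x, hx⟩ : ∃ x, A x ≠ 0 := by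
    by_contra! h
    exact one_ne_zero (hA1.symm.trans (norm_eq_zero.2 (ContinuousLinearMap.ext h)))
  have hAPx : A (P x) = A x := tendsto_nhds_unique (hA.eval_const (P x)) <| by
    simpa [hP.map_id (P x) (hP.map_mem x)] using hA.eval_const x
  exact ⟨A, hA, P x, hP.map_mem x, hAPx ▸ hx⟩

end Convergence

theorem Ultrafilter.exists_isCountablyGenerated_tendsto_projMap {α : Type*} (U : Ultrafilter α)
    (G : α → (Fin d → ℝ) ≃ₗ[ℝ] (Fin d → ℝ)) :
    ∃ (L : Filter α) (q : ℙ ℝ (Fin d → ℝ) → ℙ ℝ (Fin d → ℝ)),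
      L.IsCountablyGenerated ∧ ↑U ≤ L ∧ ∀ x, Tendsto (fun a => projMap (G a) x) L (𝓝 (q x)) := by
  have hproj : ∀ W : Submodule ℝ (Fin d → ℝ), ∃ P, LinearMap.IsProj W P := fun W =>
    let ⟨_, hWc⟩ := W.exists_isCompl
    ⟨W.projection _ hWc,
      ⟨W.projection_apply_mem hWc, fun _ => W.projection_apply_of_mem_left hWc⟩⟩
  choose P hP using hproj
  have hlim : ∀ W : Submodule ℝ (Fin d → ℝ), ∃ A : (Fin d → ℝ) →L[ℝ] (Fin d → ℝ),
      W ≠ ⊥ → Tendsto (fun a => ‖compProj (G a) (P W)‖⁻¹ • compProj (G a) (P W)) U (𝓝 A) ∧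
        ∃ w ∈ W, A w ≠ 0 := fun W => by
    by_cases hW : W = ⊥
    · exact ⟨0, fun h => absurd hW h⟩
    · obtain ⟨A, hA⟩ := U.exists_tendsto_compProj (hP W) hW G
      exact ⟨A, fun _ => hA⟩
  choose A hA using hlim
  obtain ⟨𝒮, h𝒮, hcover⟩ :=
    exists_finset_submodule_apply_ne_zero (fun W => (A W : (Fin d → ℝ) →ₗ[ℝ] (Fin d → ℝ)))
      fun W hW => (hA W hW).2
  let Φ : α → 𝒮 → (Fin d → ℝ) →L[ℝ] (Fin d → ℝ) := fun a S =>
    ‖compProj (G a) (P S)‖⁻¹ • compProj (G a) (P S)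
  -- countably generated because `𝒮` is finite
  set L := Filter.comap Φ (𝓝 fun S => A S)
  have hΦ : Tendsto Φ L (𝓝 fun S => A S) := tendsto_comap
  have hq : ∀ x, ∃ y, Tendsto (fun a => projMap (G a) x) L (𝓝 y) := by
    intro x
    induction x using Projectivization.ind with | h v hv =>
    obtain ⟨S, hS, hvS, hAv⟩ := hcover v hv
    exact ⟨_, tendsto_projMap_of_tendsto_compProj (hP S) (tendsto_pi_nhds.1 hΦ ⟨S, hS⟩)
      hvS hv hAv⟩
  choose q hq using hq
  refine ⟨L, q, inferInstance, ?_, hq⟩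
  exact tendsto_pi_nhds.2 (fun S : 𝒮 => (hA S (h𝒮 S S.2)).1) |>.le_comap

theorem exists_strictMono_tendsto_projMap (g : ℕ → (Fin d → ℝ) ≃ₗ[ℝ] (Fin d → ℝ)) :
    ∃ φ : ℕ → ℕ, StrictMono φ ∧ ∃ p : ℙ ℝ (Fin d → ℝ) → ℙ ℝ (Fin d → ℝ),
      ∀ x, Tendsto (fun i => projMap (g (φ i)) x) atTop (𝓝 (p x)) := by
  obtain ⟨L, p, hL, hUL, hp⟩ :=
    (Ultrafilter.of (atTop : Filter ℕ)).exists_isCountablyGenerated_tendsto_projMap g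
  have : (L ⊓ atTop).NeBot := neBot_of_le (le_inf hUL (Ultrafilter.of_le _))
  obtain ⟨u, hu⟩ := (L ⊓ atTop).exists_seq_tendsto
  obtain ⟨ψ, hψ, huψ⟩ := strictMono_subseq_of_tendsto_atTop (tendsto_inf.1 hu).2
  refine ⟨u ∘ ψ, huψ, p, fun x => ?_⟩
  exact ((hp x).comp (tendsto_inf.1 hu).1).comp hψ.tendsto_atTop

theorem exists_seq_tendsto_projMap_of_mem_closure {p : ℙ ℝ (Fin d → ℝ) → ℙ ℝ (Fin d → ℝ)}
    (hp : p ∈ closure (Set.range (projMap (d := d)))) :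
    ∃ f : ℕ → (Fin d → ℝ) ≃ₗ[ℝ] (Fin d → ℝ), ∀ x,
      Tendsto (fun n => projMap (f n) x) atTop (𝓝 (p x)) := by
  have : (comap projMap (𝓝 p)).NeBot := comap_neBot fun t ht => by
    obtain ⟨_, hpt, g, rfl⟩ := mem_closure_iff_nhds.1 hp t ht
    exact ⟨g, hpt⟩
  let U := Ultrafilter.of (comap projMap (𝓝 p))
  obtain ⟨L, q, hL, hUL, hq⟩ := U.exists_isCountablyGenerated_tendsto_projMap id
  have hUp : ∀ x, Tendsto (fun g => projMap g x) U (𝓝 (p x)) := fun x =>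
    tendsto_pi_nhds.1 (tendsto_comap.mono_left (Ultrafilter.of_le _)) x
  have hpq : p = q := funext fun x => tendsto_nhds_unique (hUp x) ((hq x).mono_left hUL)
  have : L.NeBot := neBot_of_le hUL
  obtain ⟨f, hf⟩ := L.exists_seq_tendsto
  exact ⟨f, fun x => hpq ▸ (hq x).comp hf⟩

/-- Every sequence in `GL(d,ℝ)` has a subsequence whose induced projective maps
converge pointwise on `ℙ(ℝ^d)`; consequently the action of `GL(d,ℝ)` on
`ℙ(ℝ^d)` is tame: every element of the enveloping semigroup (the pointwise
closure of the induced maps) is a pointwise sequential limit of group elements. -/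
theorem stmt_14 (g : ℕ → (Fin d → ℝ) ≃ₗ[ℝ] (Fin d → ℝ)) :
    (∃ φ : ℕ → ℕ, StrictMono φ ∧
      ∃ p : ℙ ℝ (Fin d → ℝ) → ℙ ℝ (Fin d → ℝ),
        ∀ x : ℙ ℝ (Fin d → ℝ),
          Tendsto (fun i => projMap (g (φ i)) x) atTop (𝓝 (p x))) ∧
    (∀ p ∈ closure (Set.range fun h : (Fin d → ℝ) ≃ₗ[ℝ] (Fin d → ℝ) => projMap h),
      ∃ f : ℕ → (Fin d → ℝ) ≃ₗ[ℝ] (Fin d → ℝ),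
        ∀ x : ℙ ℝ (Fin d → ℝ),
          Tendsto (fun n => projMap (f n) x) atTop (𝓝 (p x))) :=
  ⟨exists_strictMono_tendsto_projMap g, fun _ => exists_seq_tendsto_projMap_of_mem_closure⟩
end

section
/- Let g_n ∈ SL(d,ℝ) with ‖g_n‖ → ∞, and suppose the induced projective maps converge pointwise to p : P(ℝ^{d}) → P(ℝ^{d}). Then p is not surjective; in fact the image of p is contained in a finite union of projective subspaces of dimension strictly less than d−1. -/
/-
Normalise: along a subsequence `gₙ / ‖gₙ‖` converges to a nonzero map `h`, which is singular
since `det (gₙ / ‖gₙ‖) = ‖gₙ‖⁻ᵈ → 0`. For `v ∉ ker h` the points `gₙ [v] = [gₙ v / ‖gₙ‖]`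
converge to `[h v]`, so `p` sends `ℙ(ℝᵈ) ∖ ℙ(ker h)` into `ℙ(range h)`, a proper subspace.
Repeating the argument with the restrictions of `gₙ` to `ker h`, and so on down a strictly
decreasing chain of subspaces, covers the image of `p` by finitely many proper subspaces; and a
finite union of proper subspaces of `ℝᵈ` is not all of `ℝᵈ`.
-/

open Filter Topology Projectivization
open scoped LinearAlgebra.Projectivization

variable {d : ℕ}

open Module

section LineProj

variable {ι : Type*} [Fintype ι]

noncomputable def lineProj (v u : ι → ℝ) : ι → ℝ :=
  ((v ⬝ᵥ u) / (v ⬝ᵥ v)) • v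

lemma lineProj_smul {t : ℝ} (ht : t ≠ 0) (v : ι → ℝ) :
    lineProj (t • v) = lineProj v := by
  funext u
  simp only [lineProj, smul_dotProduct, dotProduct_smul, smul_eq_mul, smul_smul]
  by_cases hv : v ⬝ᵥ v = 0
  · simp [hv]
  · congr 1
    field_simp

lemma lineProj_self {v : ι → ℝ} (hv : v ≠ 0) : lineProj v v = v := by
  rw [lineProj, div_self (dotProduct_self_eq_zero.not.mpr hv), one_smul]

end LineProj

namespace Projectivization

-- A line is recovered from its orthogonal projection, which depends continuously on the line.
noncomputable def toLineProj : ℙ ℝ (Fin d → ℝ) → (Fin d → ℝ) → (Fin d → ℝ) :=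
  Projectivization.lift (fun v => lineProj v.1) fun a b t hab => by
    have ht : t ≠ 0 := by rintro rfl; exact a.2 (by simpa using hab)
    simp only [hab, lineProj_smul ht]

lemma continuous_toLineProj : Continuous (toLineProj (d := d)) := by
  refine Continuous.quotient_lift (continuous_pi fun u => ?_) _
  have hv : ∀ v : {v : Fin d → ℝ // v ≠ 0}, v.1 ⬝ᵥ v.1 ≠ 0 := fun v =>
    dotProduct_self_eq_zero.not.mpr v.2
  exact (Continuous.div (by fun_prop) (by fun_prop) hv).smul continuous_subtype_val

lemma toLineProj_injective : Function.Injective (toLineProj (d := d)) := by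
  intro x y hxy
  induction x using Projectivization.ind with | h v hv => ?_
  induction y using Projectivization.ind with | h w hw => ?_
  have hw' : lineProj v w = w := by
    simpa [toLineProj, lineProj_self hw] using congrFun hxy w
  exact ((mk_eq_mk_iff' ℝ w v hw hv).mpr ⟨_, hw'⟩).symm

instance : T2Space (ℙ ℝ (Fin d → ℝ)) :=
  .of_injective_continuous toLineProj_injective continuous_toLineProj

lemma tendsto_mk {α : Type*} {l : Filter α} {u : α → Fin d → ℝ} {v : Fin d → ℝ}
    (hu : ∀ n, u n ≠ 0) (hv : v ≠ 0) (h : Tendsto u l (𝓝 v)) :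
    Tendsto (fun n => mk ℝ (u n) (hu n)) l (𝓝 (mk ℝ v hv)) :=
  (continuous_quotient_mk'.tendsto _).comp (tendsto_subtype_rng.mpr h)

end Projectivization

lemma exists_subseq_tendsto_inv_norm_smul {E : Type*} [NormedAddCommGroup E] [NormedSpace ℝ E]
    [ProperSpace E] {f : ℕ → E} (hf : ∀ n, f n ≠ 0) :
    ∃ φ : ℕ → ℕ, StrictMono φ ∧ ∃ h : E, h ≠ 0 ∧
      Tendsto (fun k => ‖f (φ k)‖⁻¹ • f (φ k)) atTop (𝓝 h) := by
  have hsphere : ∀ n, ‖f n‖⁻¹ • f n ∈ Metric.sphere (0 : E) 1 := fun n => by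
    simp [norm_smul, hf n]
  obtain ⟨h, hh, φ, hφ, hlim⟩ := (isCompact_sphere (0 : E) 1).tendsto_subseq hsphere
  exact ⟨φ, hφ, h, ne_zero_of_mem_unit_sphere ⟨h, hh⟩, hlim⟩

lemma ContinuousLinearMap.det_eq_zero_of_tendsto_inv_norm_smul {E : Type*}
    [NormedAddCommGroup E] [NormedSpace ℝ E] [FiniteDimensional ℝ E] [Nontrivial E]
    {f : ℕ → E →L[ℝ] E} (hdet : ∀ n, (f n).det = 1)
    (hnorm : Tendsto (fun n => ‖f n‖) atTop atTop) {h : E →L[ℝ] E}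
    (hlim : Tendsto (fun n => ‖f n‖⁻¹ • f n) atTop (𝓝 h)) : h.det = 0 := by
  have hdet_smul : ∀ n, (‖f n‖⁻¹ • f n).det = ‖f n‖⁻¹ ^ finrank ℝ E := fun n => by
    rw [ContinuousLinearMap.det, ContinuousLinearMap.toLinearMap_smul, LinearMap.det_smul,
      ← ContinuousLinearMap.det, hdet n, mul_one]
  have hzero : Tendsto (fun n => (‖f n‖⁻¹ • f n).det) atTop (𝓝 0) := by
    simpa [hdet_smul, finrank_pos.ne'] using
      (tendsto_inv_atTop_zero.comp hnorm).pow (finrank ℝ E)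
  exact tendsto_nhds_unique ((ContinuousLinearMap.continuous_det.tendsto h).comp hlim) hzero

section LimitMap

variable {g : ℕ → (Fin d → ℝ) ≃ₗ[ℝ] (Fin d → ℝ)} {p : ℙ ℝ (Fin d → ℝ) → ℙ ℝ (Fin d → ℝ)}

lemma submodule_le_range_of_tendsto_smul {E : Type*} [NormedAddCommGroup E] [NormedSpace ℝ E]
    (hconv : ∀ x, Tendsto (fun n => projMap (g n) x) atTop (𝓝 (p x)))
    {ι : E →L[ℝ] (Fin d → ℝ)} {φ : ℕ → ℕ} (hφ : StrictMono φ) {c : ℕ → ℝ} (hc : ∀ k, c k ≠ 0)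
    {h : E →L[ℝ] (Fin d → ℝ)}
    (hlim : Tendsto (fun k => c k •
      (LinearMap.toContinuousLinearMap (g (φ k) : (Fin d → ℝ) →ₗ[ℝ] (Fin d → ℝ))).comp ι)
      atTop (𝓝 h))
    (x : ℙ ℝ (Fin d → ℝ)) (hxι : x.submodule ≤ LinearMap.range (ι : E →ₗ[ℝ] (Fin d → ℝ)))
    (hxh : ¬ x.submodule ≤
      (LinearMap.ker (h : E →ₗ[ℝ] (Fin d → ℝ))).map (ι : E →ₗ[ℝ] (Fin d → ℝ))) :
    (p x).submodule ≤ LinearMap.range (h : E →ₗ[ℝ] (Fin d → ℝ)) := by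
  induction x using Projectivization.ind with | h w hw => ?_
  simp only [submodule_mk, Submodule.span_singleton_le_iff_mem] at hxι hxh ⊢
  obtain ⟨v, hvw⟩ := hxι
  rw [ContinuousLinearMap.coe_coe] at hvw
  subst hvw
  have hhv : h v ≠ 0 := fun hv => hxh ⟨v, hv, rfl⟩
  have hgv : ∀ k, c k • g (φ k) (ι v) ≠ 0 := fun k =>
    smul_ne_zero (hc k) ((g (φ k)).map_ne_zero_iff.mpr hw)
  have hproj : ∀ k, projMap (g (φ k)) (mk ℝ (ι v) hw) = mk ℝ _ (hgv k) := fun k =>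
    (mk_eq_mk_iff' ℝ _ _ _ _).mpr ⟨(c k)⁻¹, by simp [smul_smul, hc k]⟩
  have hpx : p (mk ℝ (ι v) hw) = mk ℝ (h v) hhv := by
    refine tendsto_nhds_unique ((hconv _).comp hφ.tendsto_atTop) ?_
    simp only [Function.comp_def, hproj]
    exact tendsto_mk hgv hhv (((ContinuousLinearMap.apply ℝ _ v).continuous.tendsto h).comp hlim)
  rw [hpx, submodule_mk, Submodule.span_singleton_le_iff_mem]
  exact LinearMap.mem_range_self (h : E →ₗ[ℝ] (Fin d → ℝ)) v

def ImageCoveredOn (p : ℙ ℝ (Fin d → ℝ) → ℙ ℝ (Fin d → ℝ)) (W : Submodule ℝ (Fin d → ℝ)) :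
    Prop :=
  ∃ L : List (Submodule ℝ (Fin d → ℝ)), (∀ U ∈ L, finrank ℝ U < d) ∧
    ∀ x : ℙ ℝ (Fin d → ℝ), x.submodule ≤ W → ∃ U ∈ L, (p x).submodule ≤ U

lemma imageCoveredOn_bot : ImageCoveredOn p ⊥ :=
  ⟨[], by simp, fun x hx => by
    simpa [finrank_submodule] using Submodule.finrank_mono hx⟩

lemma ImageCoveredOn.extend {W K R : Submodule ℝ (Fin d → ℝ)} (hK : ImageCoveredOn p K)
    (hR : finrank ℝ R < d)
    (hWK : ∀ x : ℙ ℝ (Fin d → ℝ), x.submodule ≤ W → ¬ x.submodule ≤ K → (p x).submodule ≤ R) :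
    ImageCoveredOn p W := by
  obtain ⟨L, hL, hcov⟩ := hK
  refine ⟨R :: L, by simpa [hR] using hL, fun x hxW => ?_⟩
  by_cases hxK : x.submodule ≤ K
  · obtain ⟨U, hU, hxU⟩ := hcov x hxK
    exact ⟨U, List.mem_cons_of_mem R hU, hxU⟩
  · exact ⟨R, List.mem_cons_self, hWK x hxW hxK⟩

lemma imageCoveredOn_of_finrank_lt
    (hconv : ∀ x, Tendsto (fun n => projMap (g n) x) atTop (𝓝 (p x)))
    (W : Submodule ℝ (Fin d → ℝ)) (hW : finrank ℝ W < d) : ImageCoveredOn p W := by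
  induction W using WellFoundedLT.induction with | _ W ih => ?_
  rcases eq_or_ne W ⊥ with rfl | hW0
  · exact imageCoveredOn_bot
  have : Nontrivial W := Submodule.nontrivial_iff_ne_bot.mpr hW0
  set f : ℕ → W →L[ℝ] (Fin d → ℝ) := fun n =>
    (LinearMap.toContinuousLinearMap (g n : (Fin d → ℝ) →ₗ[ℝ] (Fin d → ℝ))).comp W.subtypeL
  have hf : ∀ n, f n ≠ 0 := fun n hfn => by
    obtain ⟨w, hw⟩ := exists_ne (0 : W)
    exact hw (by simpa [f] using congr($hfn w))
  obtain ⟨φ, hφ, h, hh0, hlim⟩ := exists_subseq_tendsto_inv_norm_smul (f := f) hf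
  set K := (LinearMap.ker (h : W →ₗ[ℝ] (Fin d → ℝ))).map W.subtype
  have hKW : K < W := Submodule.map_subtype_top W ▸ Submodule.map_strictMono_of_injective
    W.injective_subtype (lt_top_iff_ne_top.mpr fun hker =>
      hh0 (ContinuousLinearMap.coe_injective (LinearMap.ker_eq_top.mp hker)))
  refine (ih K hKW ((Submodule.finrank_lt_finrank_of_lt hKW).trans hW)).extend
    (R := LinearMap.range (h : W →ₗ[ℝ] (Fin d → ℝ)))
    ((LinearMap.finrank_range_le _).trans_lt hW) fun x hxW hxK => ?_
  have hsubtype : LinearMap.range (W.subtypeL : W →ₗ[ℝ] (Fin d → ℝ)) = W := W.range_subtype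
  exact submodule_le_range_of_tendsto_smul hconv (ι := W.subtypeL) hφ
    (c := fun k => ‖f (φ k)‖⁻¹)
    (fun k => inv_ne_zero ((ContinuousLinearMap.opNorm_zero_iff _).not.mpr (hf _))) hlim x
    (hxW.trans_eq hsubtype.symm) hxK

lemma imageCoveredOn_top [Nontrivial (Fin d → ℝ)]
    (hdet : ∀ n, LinearMap.det ((g n : (Fin d → ℝ) →ₗ[ℝ] (Fin d → ℝ))) = 1)
    (hnorm : Tendsto
      (fun n => ‖LinearMap.toContinuousLinearMap
        ((g n : (Fin d → ℝ) →ₗ[ℝ] (Fin d → ℝ)))‖) atTop atTop)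
    (hconv : ∀ x, Tendsto (fun n => projMap (g n) x) atTop (𝓝 (p x))) :
    ImageCoveredOn p ⊤ := by
  set G : ℕ → (Fin d → ℝ) →L[ℝ] (Fin d → ℝ) := fun n =>
    LinearMap.toContinuousLinearMap (g n : (Fin d → ℝ) →ₗ[ℝ] (Fin d → ℝ))
  have hG : ∀ n, G n ≠ 0 := fun n hGn => by
    obtain ⟨v, hv⟩ := exists_ne (0 : Fin d → ℝ)
    exact hv ((g n).map_eq_zero_iff.mp congr($hGn v))
  obtain ⟨φ, hφ, h, hh0, hlim⟩ := exists_subseq_tendsto_inv_norm_smul (f := G) hG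
  have hdet0 : h.det = 0 := ContinuousLinearMap.det_eq_zero_of_tendsto_inv_norm_smul
    (f := G ∘ φ) (fun k => hdet (φ k)) (hnorm.comp hφ.tendsto_atTop) hlim
  have hker : finrank ℝ (LinearMap.ker (h : (Fin d → ℝ) →ₗ[ℝ] (Fin d → ℝ))) < d := by
    simpa using Submodule.finrank_lt fun hker =>
      hh0 (ContinuousLinearMap.coe_injective (LinearMap.ker_eq_top.mp hker))
  have hrange : finrank ℝ (LinearMap.range (h : (Fin d → ℝ) →ₗ[ℝ] (Fin d → ℝ))) < d := by
    simpa using Submodule.finrank_lt (LinearMap.range_lt_top_of_det_eq_zero hdet0).ne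
  refine (imageCoveredOn_of_finrank_lt hconv _ hker).extend hrange fun x _ hxK => ?_
  exact submodule_le_range_of_tendsto_smul hconv (ι := .id ℝ _) hφ
    (c := fun k => ‖G (φ k)‖⁻¹)
    (fun k => inv_ne_zero ((ContinuousLinearMap.opNorm_zero_iff _).not.mpr (hG _))) hlim x
    (by simp) (by simpa using hxK)

end LimitMap

lemma ContinuousLinearMap.nontrivial_of_tendsto_norm_atTop {E F : Type*}
    [NormedAddCommGroup E] [NormedSpace ℝ E] [NormedAddCommGroup F] [NormedSpace ℝ F]
    {f : ℕ → E →L[ℝ] F} (hf : Tendsto (fun n => ‖f n‖) atTop atTop) : Nontrivial E := by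
  by_contra hE
  rw [not_nontrivial_iff_subsingleton] at hE
  have hzero : ∀ n, f n = 0 := fun n => ext fun x => by
    rw [Subsingleton.elim x 0, map_zero, zero_apply]
  simp only [hzero, norm_zero] at hf
  exact not_tendsto_const_atTop 0 atTop hf

lemma not_surjective_of_forall_submodule_le [Nontrivial (Fin d → ℝ)]
    {p : ℙ ℝ (Fin d → ℝ) → ℙ ℝ (Fin d → ℝ)} {k : ℕ} {W : Fin k → Submodule ℝ (Fin d → ℝ)}
    (hW : ∀ i, finrank ℝ (W i) < d) (hp : ∀ x, ∃ i, (p x).submodule ≤ W i) :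
    ¬ Function.Surjective p := by
  intro hsurj
  have hW_ne_top : ∀ i, W i ≠ ⊤ := fun i hi =>
    (hW i).ne (by rw [hi, finrank_top, finrank_fin_fun])
  obtain ⟨v, -, hv⟩ := Set.exists_of_ssubset <|
    Submodule.iUnion_ssubset_of_forall_ne_top_of_card_lt Finset.univ W hW_ne_top
      (by simp [ENat.card_eq_top_of_infinite])
  obtain ⟨w, hw⟩ := exists_ne (0 : Fin d → ℝ)
  obtain ⟨i₀, -⟩ := hp (mk ℝ w hw)
  have hv0 : v ≠ 0 := fun h => hv (Set.mem_biUnion (Finset.mem_univ i₀) (h ▸ (W i₀).zero_mem))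
  obtain ⟨x, hx⟩ := hsurj (mk ℝ v hv0)
  obtain ⟨i, hi⟩ := hp x
  rw [hx, submodule_mk, Submodule.span_singleton_le_iff_mem] at hi
  exact hv (Set.mem_biUnion (Finset.mem_univ i) hi)

theorem stmt_15_general
    (g : ℕ → (Fin d → ℝ) ≃ₗ[ℝ] (Fin d → ℝ))
    (hdet : ∀ n, LinearMap.det ((g n : (Fin d → ℝ) →ₗ[ℝ] (Fin d → ℝ))) = 1)
    (hnorm : Tendsto
      (fun n => ‖LinearMap.toContinuousLinearMap
        ((g n : (Fin d → ℝ) →ₗ[ℝ] (Fin d → ℝ)))‖) atTop atTop)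
    (p : ℙ ℝ (Fin d → ℝ) → ℙ ℝ (Fin d → ℝ))
    (hconv : ∀ x : ℙ ℝ (Fin d → ℝ),
      Tendsto (fun n => projMap (g n) x) atTop (𝓝 (p x))) :
    ¬ Function.Surjective p ∧
      ∃ (k : ℕ) (W : Fin k → Submodule ℝ (Fin d → ℝ)),
        (∀ i, Module.finrank ℝ (W i) < d) ∧
        ∀ x : ℙ ℝ (Fin d → ℝ), ∃ i, (p x).submodule ≤ W i := by
  have := ContinuousLinearMap.nontrivial_of_tendsto_norm_atTop hnorm
  obtain ⟨L, hL, hcov⟩ := imageCoveredOn_top hdet hnorm hconv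
  have hcov' : ∀ x, ∃ i, (p x).submodule ≤ L.get i := fun x => by
    obtain ⟨U, hU, hxU⟩ := hcov x le_top
    obtain ⟨i, rfl⟩ := List.mem_iff_get.mp hU
    exact ⟨i, hxU⟩
  have hL' : ∀ i, finrank ℝ (L.get i) < d := fun i => hL _ (L.get_mem i)
  exact ⟨not_surjective_of_forall_submodule_le hL' hcov', L.length, L.get, hL', hcov'⟩

/-- If `gₙ ∈ SL(d,ℝ)` with `‖gₙ‖ → ∞` and the induced projective maps converge
pointwise to `p : ℙ(ℝ^d) → ℙ(ℝ^d)`, then `p` is not surjective; indeed its image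
is contained in a finite union of projective subspaces of projective dimension
strictly less than `d-1` (i.e. coming from linear subspaces of dimension `< d`). -/
theorem stmt_15 (hd : 2 ≤ d)
    (g : ℕ → (Fin d → ℝ) ≃ₗ[ℝ] (Fin d → ℝ))
    (hdet : ∀ n, LinearMap.det ((g n : (Fin d → ℝ) →ₗ[ℝ] (Fin d → ℝ))) = 1)
    (hnorm : Tendsto
      (fun n => ‖LinearMap.toContinuousLinearMap
        ((g n : (Fin d → ℝ) →ₗ[ℝ] (Fin d → ℝ)))‖) atTop atTop)
    (p : ℙ ℝ (Fin d → ℝ) → ℙ ℝ (Fin d → ℝ))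
    (hconv : ∀ x : ℙ ℝ (Fin d → ℝ),
      Tendsto (fun n => projMap (g n) x) atTop (𝓝 (p x))) :
    ¬ Function.Surjective p ∧
      ∃ (k : ℕ) (W : Fin k → Submodule ℝ (Fin d → ℝ)),
        (∀ i, Module.finrank ℝ (W i) < d) ∧
        ∀ x : ℙ ℝ (Fin d → ℝ), ∃ i, (p x).submodule ≤ W i :=
  stmt_15_general g hdet hnorm p hconv
end

section
/- Let Γ act on a compact metric space X, let π : X → Y be a Γ-equivariant continuous surjection of Γ-systems, and let Y₀ ⊆ Y be the set of continuity points of the map y ↦ π⁻¹(y) ∈ 2^X. Define Y* = cl{π⁻¹(y) : y ∈ Y₀} ⊆ 2^X and X* = cl{(x, π⁻¹(π(x))) : π(x) ∈ Y₀} ⊆ X × Y*. Then X* = {(x, y*) : x ∈ y* ∈ Y*}, the projection π* : X* → Y*, (x,y*) ↦ y*, is an open map, and the map θ : Y* → Y sending y* to the unique y with y* ⊆ π⁻¹(y) is continuous and surjective. -/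
open TopologicalSpace

/-- The set of continuity points of the fiber map `y ↦ π⁻¹(y) ∈ 2^X` of a
continuous surjection between compact metric spaces is dense (the fiber map is
upper semicontinuous, so its discontinuity set is meagre). -/
theorem aux_dense_cont {X Y : Type*} [MetricSpace X] [CompactSpace X]
    [MetricSpace Y] [CompactSpace Y]
    (π : X → Y) (hc : Continuous π) (hs : Function.Surjective π)
    (fib : Y → NonemptyCompacts X) (hfib : ∀ y, (fib y : Set X) = π ⁻¹' {y}) :
    Dense {y : Y | ContinuousAt fib y} := by
  rcases isEmpty_or_nonempty X with hX | hX
  · haveI : IsEmpty Y := ⟨fun y => by rcases hs y with ⟨x, -⟩; exact IsEmpty.false x⟩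
    intro y; exact isEmptyElim y
  obtain ⟨s, hs_count, hs_dense⟩ := TopologicalSpace.exists_countable_dense X
  haveI := hs_count.to_subtype
  set B : s × ℚ → Set Y := fun p => π '' Metric.closedBall (p.1 : X) (p.2 : ℝ) with hB
  have hBclosed : ∀ p, IsClosed (B p) :=
    fun p => (Metric.isClosed_closedBall.isCompact.image hc).isClosed
  have hdense : Dense (⋂ p, (frontier (B p))ᶜ) :=
    dense_iInter_of_isOpen (fun p => isClosed_frontier.isOpen_compl)
      (fun p => interior_eq_empty_iff_dense_compl.1 (interior_frontier (hBclosed p)))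
  apply hdense.mono
  intro y hy
  simp only [Set.mem_iInter, Set.mem_compl_iff] at hy
  show ContinuousAt fib y
  rw [Metric.continuousAt_iff']
  intro ε hε
  set K : Set X := (fib y : Set X) with hK
  -- the upper-semicontinuity neighborhood
  have hsub : K ⊆ Metric.thickening (ε/2) K :=
    Metric.self_subset_thickening (by linarith) K
  set C : Set Y := π '' (Metric.thickening (ε/2) K)ᶜ with hC
  have hCclosed : IsClosed C :=
    ((Metric.isOpen_thickening.isClosed_compl).isCompact.image hc).isClosed
  have hyC : y ∉ C := by
    rintro ⟨w, hw, hwy⟩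
    refine hw (hsub ?_)
    rw [hK, hfib]
    exact hwy
  -- the lower-semicontinuity neighborhood
  obtain ⟨q, hq1, hq2⟩ := exists_rat_btwn (show (ε/8 : ℝ) < ε/4 by linarith)
  have hchoice : ∀ x : X, ∃ c : s, dist x (c : X) < ε/8 := by
    intro x
    rcases Metric.mem_closure_iff.1 (hs_dense x) (ε/8) (by linarith) with ⟨c, hcs, hcd⟩
    exact ⟨⟨c, hcs⟩, hcd⟩
  choose c hc8 using hchoice
  have hcover : K ⊆ ⋃ x : K, Metric.ball ((c x : X)) (q : ℝ) := by
    intro x hx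
    exact Set.mem_iUnion.2 ⟨⟨x, hx⟩, Metric.mem_ball.2 (lt_trans (hc8 x) hq1)⟩
  obtain ⟨t, ht⟩ := (fib y).isCompact.elim_finite_subcover
    (fun x : K => Metric.ball ((c x : X)) (q : ℝ)) (fun _ => Metric.isOpen_ball) hcover
  set N : Set Y := Cᶜ ∩ ⋂ x ∈ t, interior (B (c x, q)) with hN
  have hNopen : IsOpen N :=
    hCclosed.isOpen_compl.inter (isOpen_biInter_finset (fun x _ => isOpen_interior))
  have hyN : y ∈ N := by
    refine ⟨hyC, Set.mem_iInter₂.2 fun x hx => ?_⟩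
    have hπx : π (x : X) = y := by
      have hxK : (x : X) ∈ (fib y : Set X) := x.2
      rwa [hfib, Set.mem_preimage, Set.mem_singleton_iff] at hxK
    have hyB : y ∈ B (c x, q) :=
      ⟨(x : X), Metric.mem_closedBall.2 ((hc8 x).le.trans hq1.le), hπx⟩
    by_contra hni
    exact hy (c x, q) (((hBclosed (c x, q)).frontier_eq) ▸ ⟨hyB, hni⟩)
  filter_upwards [hNopen.mem_nhds hyN] with y' hy'
  obtain ⟨hy'C, hy'B⟩ := hy'
  have h1 : ∀ a ∈ (fib y' : Set X), ∃ b ∈ K, dist a b ≤ ε/2 := by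
    intro a ha
    have hπa : π a = y' := by
      rwa [hfib, Set.mem_preimage, Set.mem_singleton_iff] at ha
    have hmem : a ∈ Metric.thickening (ε/2) K := by
      by_contra hna
      exact hy'C ⟨a, hna, hπa⟩
    rcases Metric.mem_thickening_iff.1 hmem with ⟨b, hb, hab⟩
    exact ⟨b, hb, hab.le⟩
  have h2 : ∀ b ∈ K, ∃ a ∈ (fib y' : Set X), dist b a ≤ ε/2 := by
    intro b hb
    rcases Set.mem_iUnion₂.1 (ht hb) with ⟨x, hxt, hxb⟩
    rcases interior_subset (Set.mem_iInter₂.1 hy'B x hxt) with ⟨z, hz, hzy⟩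
    refine ⟨z, ?_, ?_⟩
    · rw [hfib, Set.mem_preimage, Set.mem_singleton_iff]; exact hzy
    · have h1' : dist b (c x : X) < q := Metric.mem_ball.1 hxb
      have h2' : dist (c x : X) z ≤ q := by
        rw [dist_comm]; exact Metric.mem_closedBall.1 hz
      calc dist b z ≤ dist b (c x : X) + dist (c x : X) z := dist_triangle _ _ _
        _ ≤ q + q := by linarith
        _ ≤ ε/2 := by linarith
  have hh : Metric.hausdorffDist (fib y' : Set X) (fib y : Set X) ≤ ε/2 :=
    Metric.hausdorffDist_le_of_mem_dist (by linarith) h1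
      (fun b hb => by
        rcases h2 b hb with ⟨a, ha, hba⟩
        exact ⟨a, ha, hba⟩)
  calc dist (fib y') (fib y)
      = Metric.hausdorffDist (fib y' : Set X) (fib y : Set X) :=
        Metric.NonemptyCompacts.dist_eq
    _ ≤ ε/2 := hh
    _ < ε := by linarith

/-- The O-shadow diagram: for a homomorphism `π : X → Y` of compact metric
`Γ`-systems, with `Y₀` the set of continuity points of the fiber map
`y ↦ π⁻¹(y) ∈ 2^X`, `Y* = cl{π⁻¹(y) : y ∈ Y₀}` and
`X* = cl{(x, π⁻¹(π x)) : π x ∈ Y₀}`, one has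
`X* = {(x,y*) : x ∈ y* ∈ Y*}`, the projection `π* : X* → Y*` is an open map,
and the map `θ : Y* → Y` sending `y*` to the unique `y` with `y* ⊆ π⁻¹(y)` is
continuous and surjective. -/
theorem stmt_16 {Γ X Y : Type*} [Group Γ]
    [MetricSpace X] [CompactSpace X] [MetricSpace Y] [CompactSpace Y]
    [MulAction Γ X] [ContinuousConstSMul Γ X]
    [MulAction Γ Y] [ContinuousConstSMul Γ Y]
    (π : X → Y) (hc : Continuous π) (hs : Function.Surjective π)
    (heq : ∀ (γ : Γ) (x : X), π (γ • x) = γ • π x)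
    (fib : Y → NonemptyCompacts X) (hfib : ∀ y, (fib y : Set X) = π ⁻¹' {y})
    (Y₀ : Set Y) (hY₀ : Y₀ = {y : Y | ContinuousAt fib y})
    (Ystar : Set (NonemptyCompacts X)) (hYstar : Ystar = closure (fib '' Y₀))
    (Xstar : Set (X × NonemptyCompacts X))
    (hXstar : Xstar = closure
      {q : X × NonemptyCompacts X | π q.1 ∈ Y₀ ∧ q.2 = fib (π q.1)}) :
    (Xstar = {q : X × NonemptyCompacts X | q.2 ∈ Ystar ∧ q.1 ∈ (q.2 : Set X)}) ∧
    (∀ V : Set (X × NonemptyCompacts X), IsOpen V →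
      ∃ W : Set (NonemptyCompacts X), IsOpen W ∧
        Prod.snd '' (V ∩ Xstar) = W ∩ Ystar) ∧
    (∃ θ : NonemptyCompacts X → Y,
      ContinuousOn θ Ystar ∧ θ '' Ystar = Set.univ ∧
      ∀ A ∈ Ystar, (A : Set X) ⊆ π ⁻¹' {θ A}) := by
  rcases isEmpty_or_nonempty X with hX | hX
  · haveI : IsEmpty Y := ⟨fun y => by rcases hs y with ⟨x, -⟩; exact IsEmpty.false x⟩
    haveI : IsEmpty (NonemptyCompacts X) :=
      ⟨fun A => by rcases A.nonempty with ⟨x, -⟩; exact IsEmpty.false x⟩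
    refine ⟨?_, ?_, ?_⟩
    · ext q; exact isEmptyElim q.1
    · intro V hV
      refine ⟨∅, isOpen_empty, ?_⟩
      ext A; exact isEmptyElim A
    · refine ⟨fun A => isEmptyElim A, fun A _ => isEmptyElim A, ?_, fun A _ => isEmptyElim A⟩
      ext y; exact isEmptyElim y
  -- nonempty case
  have hfin : ∀ A B : NonemptyCompacts X,
      EMetric.hausdorffEdist (A : Set X) (B : Set X) ≠ ⊤ :=
    fun A B => Metric.hausdorffEdist_ne_top_of_nonempty_of_bounded A.nonempty B.nonempty
      A.isCompact.isBounded B.isCompact.isBounded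
  have hmemfib : ∀ {y : Y} {x : X}, x ∈ (fib y : Set X) → π x = y := by
    intro y x hx
    rwa [hfib, Set.mem_preimage, Set.mem_singleton_iff] at hx
  -- π is constant on every element of Ystar
  have hconst : ∀ A ∈ Ystar, ∀ a ∈ (A : Set X), ∀ b ∈ (A : Set X), π a = π b := by
    intro A hA a ha b hb
    apply eq_of_forall_dist_le
    intro ε hε
    obtain ⟨δ, hδ, hδε⟩ := Metric.uniformContinuous_iff.1
      (CompactSpace.uniformContinuous_of_continuous hc) (ε/2) (by linarith)
    rw [hYstar] at hA
    rcases Metric.mem_closure_iff.1 hA δ hδ with ⟨B, hBmem, hdAB⟩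
    rcases hBmem with ⟨y', hy', rfl⟩
    rw [Metric.NonemptyCompacts.dist_eq] at hdAB
    rcases Metric.exists_dist_lt_of_hausdorffDist_lt ha hdAB (hfin _ _) with ⟨a', ha', haa'⟩
    rcases Metric.exists_dist_lt_of_hausdorffDist_lt hb hdAB (hfin _ _) with ⟨b', hb', hbb'⟩
    have d1 : dist (π a) (π a') < ε/2 := hδε haa'
    have d2 : dist (π b) (π b') < ε/2 := hδε hbb'
    have e1 : π a' = y' := hmemfib ha'
    have e2 : π b' = y' := hmemfib hb'
    have e3 : dist (π a') (π b) = dist (π b) (π b') := by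
      rw [e1, ← e2, dist_comm]
    linarith [dist_triangle (π a) (π a') (π b), d1, d2, e3]
  have hclosed_mem : IsClosed {q : X × NonemptyCompacts X | q.1 ∈ (q.2 : Set X)} := by
    have heq' : {q : X × NonemptyCompacts X | q.1 ∈ (q.2 : Set X)} =
        (fun q : X × NonemptyCompacts X => Metric.infDist q.1 (q.2 : Set X)) ⁻¹' {0} := by
      ext q
      simp only [Set.mem_setOf_eq, Set.mem_preimage, Set.mem_singleton_iff]
      exact q.2.isCompact.isClosed.mem_iff_infDist_zero q.2.nonempty
    rw [heq']
    exact IsClosed.preimage Metric.lipschitz_infDist.continuous isClosed_singleton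
  have hpart1 : Xstar = {q : X × NonemptyCompacts X | q.2 ∈ Ystar ∧ q.1 ∈ (q.2 : Set X)} := by
    apply Set.Subset.antisymm
    · rw [hXstar]
      apply closure_minimal
      · rintro ⟨x, A⟩ ⟨h1, h2⟩
        refine ⟨?_, ?_⟩
        · rw [hYstar]; exact subset_closure ⟨π x, h1, h2.symm⟩
        · show x ∈ (A : Set X)
          change A = fib (π x) at h2
          rw [h2, hfib]
          exact rfl
      · have heq' : {q : X × NonemptyCompacts X | q.2 ∈ Ystar ∧ q.1 ∈ (q.2 : Set X)} =
            (Prod.snd ⁻¹' Ystar) ∩ {q : X × NonemptyCompacts X | q.1 ∈ (q.2 : Set X)} := rfl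
        rw [heq']
        exact ((hYstar ▸ isClosed_closure).preimage continuous_snd).inter hclosed_mem
    · rintro ⟨x, A⟩ ⟨hA, hx⟩
      rw [hXstar, Metric.mem_closure_iff]
      intro ε hε
      rw [hYstar] at hA
      rcases Metric.mem_closure_iff.1 hA ε hε with ⟨B, ⟨y', hy', rfl⟩, hdAB⟩
      rw [Metric.NonemptyCompacts.dist_eq] at hdAB
      rcases Metric.exists_dist_lt_of_hausdorffDist_lt hx hdAB (hfin _ _) with ⟨x', hx', hxx'⟩
      have hπx' : π x' = y' := hmemfib hx'
      refine ⟨(x', fib y'), ⟨?_, ?_⟩, ?_⟩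
      · show π x' ∈ Y₀
        rw [hπx']; exact hy'
      · show fib y' = fib (π x')
        rw [hπx']
      · rw [Prod.dist_eq]
        refine max_lt hxx' ?_
        rw [Metric.NonemptyCompacts.dist_eq]
        exact hdAB
  refine ⟨hpart1, ?_, ?_⟩
  · -- openness of the projection
    intro V hV
    refine ⟨{A : NonemptyCompacts X | ∃ x ∈ (A : Set X), (x, A) ∈ V}, ?_, ?_⟩
    · rw [Metric.isOpen_iff]
      rintro A ⟨x, hxA, hxV⟩
      rcases Metric.isOpen_iff.1 hV (x, A) hxV with ⟨ε, hε, hball⟩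
      refine ⟨ε, hε, ?_⟩
      intro A' hA'
      rw [Metric.mem_ball] at hA'
      have hd : Metric.hausdorffDist (A : Set X) (A' : Set X) < ε := by
        rw [← Metric.NonemptyCompacts.dist_eq, dist_comm]
        exact hA'
      rcases Metric.exists_dist_lt_of_hausdorffDist_lt hxA hd (hfin _ _) with ⟨x', hx', hxx'⟩
      refine ⟨x', hx', hball ?_⟩
      rw [Metric.mem_ball, Prod.dist_eq]
      exact max_lt (by rw [dist_comm]; exact hxx') hA'
    · rw [hpart1]
      ext A
      constructor
      · rintro ⟨q, ⟨hqV, hqY, hqm⟩, rfl⟩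
        exact ⟨⟨q.1, hqm, by rwa [Prod.mk.eta]⟩, hqY⟩
      · rintro ⟨⟨x, hxA, hxV⟩, hA⟩
        exact ⟨(x, A), ⟨hxV, hA, hxA⟩, rfl⟩
  · -- the map θ
    refine ⟨fun A => π A.nonempty.some, ?_, ?_, ?_⟩
    · rw [Metric.continuousOn_iff]
      intro A hA ε hε
      obtain ⟨δ, hδ, hδε⟩ := Metric.uniformContinuous_iff.1
        (CompactSpace.uniformContinuous_of_continuous hc) ε hε
      refine ⟨δ, hδ, ?_⟩
      intro B hB hdist
      have hd : Metric.hausdorffDist (B : Set X) (A : Set X) < δ := by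
        rw [← Metric.NonemptyCompacts.dist_eq]
        exact hdist
      rcases Metric.exists_dist_lt_of_hausdorffDist_lt B.nonempty.some_mem hd (hfin _ _)
        with ⟨a, ha, hba⟩
      have hlt : dist (π B.nonempty.some) (π a) < ε := hδε hba
      have he : π a = π A.nonempty.some := hconst A hA a ha _ A.nonempty.some_mem
      show dist (π B.nonempty.some) (π A.nonempty.some) < ε
      rwa [he] at hlt
    · -- surjectivity
      have hYd : Dense Y₀ := by
        rw [hY₀]; exact aux_dense_cont π hc hs fib hfib
      have hYc : IsClosed Ystar := hYstar ▸ isClosed_closure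
      have hθcont : ContinuousOn (fun A : NonemptyCompacts X => π A.nonempty.some) Ystar := by
        rw [Metric.continuousOn_iff]
        intro A hA ε hε
        obtain ⟨δ, hδ, hδε⟩ := Metric.uniformContinuous_iff.1
          (CompactSpace.uniformContinuous_of_continuous hc) ε hε
        refine ⟨δ, hδ, ?_⟩
        intro B hB hdist
        have hd : Metric.hausdorffDist (B : Set X) (A : Set X) < δ := by
          rw [← Metric.NonemptyCompacts.dist_eq]
          exact hdist
        rcases Metric.exists_dist_lt_of_hausdorffDist_lt B.nonempty.some_mem hd (hfin _ _)
          with ⟨a, ha, hba⟩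
        have hlt : dist (π B.nonempty.some) (π a) < ε := hδε hba
        have he : π a = π A.nonempty.some := hconst A hA a ha _ A.nonempty.some_mem
        show dist (π B.nonempty.some) (π A.nonempty.some) < ε
        rwa [he] at hlt
      have himg : IsClosed ((fun A : NonemptyCompacts X => π A.nonempty.some) '' Ystar) :=
        (hYc.isCompact.image_of_continuousOn hθcont).isClosed
      have hsub : Y₀ ⊆ (fun A : NonemptyCompacts X => π A.nonempty.some) '' Ystar := by
        intro y hy
        refine ⟨fib y, hYstar ▸ subset_closure ⟨y, hy, rfl⟩, ?_⟩
        exact hmemfib (fib y).nonempty.some_mem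
      have hcl : closure Y₀ ⊆ (fun A : NonemptyCompacts X => π A.nonempty.some) '' Ystar :=
        closure_minimal hsub himg
      rw [hYd.closure_eq] at hcl
      exact Set.eq_univ_of_univ_subset hcl
    · intro A hA a ha
      rw [Set.mem_preimage, Set.mem_singleton_iff]
      exact hconst A hA a ha _ A.nonempty.some_mem
end
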